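/- Let h ∈ L²[0,1] be nonnegative, and suppose the series ḣ := Σ_{n≥1} ⟨h, ẽ_n⟩ ẽ_n' converges in L²[0,1], where ẽ₁(u)=1 and ẽ_k(u) = √2 cos(π(k−1)u) for k ≥ 2. Then ḣ · 𝟙{h = 0} = 0 almost everywhere on [0,1]. -/

import Mathlib

/-!
Integrating the partial sums of the differentiated series term by term gives
`∑ cₖ (ẽₖ(x) - ẽₖ(0))`, and since L² convergence controls primitives uniformly these converge
uniformly to `H(x) = ∫₀ˣ ḣ`. Pairing with `ẽⱼ` shows that all cosine coefficients of `h - H` of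
index `j ≥ 1` vanish, so by completeness of the cosine system (Weierstrass approximation in the
variable `cos πx`) `h = H + c` almost everywhere. The continuous function `H + c` is then
nonnegative on `[0,1]`; at a Lebesgue point `u` of `ḣ` where it vanishes it has an interior
minimum and derivative `ḣ(u)`, which must therefore be `0`.
-/

open MeasureTheory Filter Topology

/-- The Neumann cosine orthonormal basis of `L²[0,1]`: `ẽ₁ = 1`,
`ẽ_k(u) = √2 cos(π(k-1)u)` (indexed here from `k = 0`). -/
noncomputable def cosBasisFun (k : ℕ) : ℝ → ℝ :=
  fun u => if k = 0 then 1 else Real.sqrt 2 * Real.cos (Real.pi * k * u)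

/-- The derivative of `cosBasisFun k`. -/
noncomputable def cosBasisDeriv (k : ℕ) : ℝ → ℝ :=
  fun u => if k = 0 then 0 else -(Real.sqrt 2 * (Real.pi * k) * Real.sin (Real.pi * k * u))

open Real Set

lemma cos_mul_cos_eq_half_add (a b : ℝ) : cos a * cos b = (cos (a + b) + cos (a - b)) / 2 := by
  rw [cos_add, cos_sub]; ring

lemma integral_cos_pi_int_mul (m : ℤ) :
    ∫ x in (0:ℝ)..1, cos (π * m * x) = if m = 0 then 1 else 0 := by
  split_ifs with hm
  · simp [hm]
  · have hπm : π * m ≠ 0 := mul_ne_zero pi_ne_zero (Int.cast_ne_zero.mpr hm)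
    rw [intervalIntegral.integral_comp_mul_left (fun x => cos x) hπm, integral_cos,
      mul_one, mul_zero, sin_zero, mul_comm, sin_int_mul_pi, sub_zero, smul_zero]

lemma integral_cos_pi_nat_mul_mul_cos_pi_nat_mul (k j : ℕ) (hk : k ≠ 0) :
    ∫ x in (0:ℝ)..1, cos (π * k * x) * cos (π * j * x) = if k = j then 1 / 2 else 0 := by
  have hsum : ∀ x, cos (π * k * x) * cos (π * j * x)
      = (cos (π * ((k + j : ℕ) : ℤ) * x) + cos (π * ((k : ℤ) - j : ℤ) * x)) / 2 := by
    intro x; rw [cos_mul_cos_eq_half_add]; push_cast; ring_nf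
  simp only [hsum]
  rw [intervalIntegral.integral_div, intervalIntegral.integral_add
    ((by fun_prop : Continuous _).intervalIntegrable _ _)
    ((by fun_prop : Continuous _).intervalIntegrable _ _),
    integral_cos_pi_int_mul, integral_cos_pi_int_mul]
  split_ifs <;> first | omega | norm_num

lemma cosBasisFun_zero : cosBasisFun 0 = fun _ => 1 := by
  ext; simp [cosBasisFun]

lemma cosBasisFun_of_ne_zero {k : ℕ} (hk : k ≠ 0) :
    cosBasisFun k = fun u => √2 * cos (π * k * u) := by
  ext; simp [cosBasisFun, hk]

@[fun_prop]
lemma continuous_cosBasisFun (k : ℕ) : Continuous (cosBasisFun k) := by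
  unfold cosBasisFun; split <;> fun_prop

@[fun_prop]
lemma continuous_cosBasisDeriv (k : ℕ) : Continuous (cosBasisDeriv k) := by
  unfold cosBasisDeriv; split <;> fun_prop

lemma hasDerivAt_cosBasisFun (k : ℕ) (x : ℝ) :
    HasDerivAt (cosBasisFun k) (cosBasisDeriv k x) x := by
  rcases eq_or_ne k 0 with rfl | hk
  · simpa [cosBasisFun_zero, cosBasisDeriv] using hasDerivAt_const x (1:ℝ)
  · rw [cosBasisFun_of_ne_zero hk]
    simp only [cosBasisDeriv, if_neg hk]
    have h := ((hasDerivAt_id' x).const_mul (π * k)).cos.const_mul √2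
    rw [mul_one] at h
    exact h.congr_deriv (by ring)

lemma integral_cosBasisDeriv (k : ℕ) (x : ℝ) :
    ∫ t in (0:ℝ)..x, cosBasisDeriv k t = cosBasisFun k x - cosBasisFun k 0 :=
  intervalIntegral.integral_eq_sub_of_hasDerivAt (fun t _ => hasDerivAt_cosBasisFun k t)
    ((continuous_cosBasisDeriv k).intervalIntegrable _ _)

lemma integral_cosBasisFun_mul_cosBasisFun (k j : ℕ) :
    ∫ x in (0:ℝ)..1, cosBasisFun k x * cosBasisFun j x = if k = j then 1 else 0 := by
  rcases eq_or_ne k 0 with rfl | hk <;> rcases eq_or_ne j 0 with rfl | hj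
  · simp [cosBasisFun_zero]
  · have := integral_cos_pi_int_mul j
    simp_all [cosBasisFun_zero, cosBasisFun_of_ne_zero hj, Ne.symm hj]
  · have := integral_cos_pi_int_mul k
    simp_all [cosBasisFun_zero, cosBasisFun_of_ne_zero hk]
  · have hsq : √2 * √2 = 2 := mul_self_sqrt zero_le_two
    simp only [cosBasisFun_of_ne_zero hk, cosBasisFun_of_ne_zero hj]
    calc ∫ x in (0:ℝ)..1, √2 * cos (π * k * x) * (√2 * cos (π * j * x))
        = 2 * ∫ x in (0:ℝ)..1, cos (π * k * x) * cos (π * j * x) := by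
          rw [← intervalIntegral.integral_const_mul]; congr 1; ext x
          linear_combination cos (π * k * x) * cos (π * j * x) * hsq
      _ = _ := by rw [integral_cos_pi_nat_mul_mul_cos_pi_nat_mul k j hk]; split_ifs <;> norm_num

lemma integral_cosBasisFun {j : ℕ} (hj : j ≠ 0) : ∫ x in (0:ℝ)..1, cosBasisFun j x = 0 := by
  simpa [cosBasisFun_zero, Ne.symm hj] using integral_cosBasisFun_mul_cosBasisFun 0 j

section CosineCompleteness

open Polynomial

variable {K : ℝ → ℝ}

lemma intervalIntegrable_mul_cos_mul_eval_cos (hK : IntervalIntegrable K volume 0 1)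
    (P : ℝ[X]) (j : ℤ) :
    IntervalIntegrable (fun x => K x * (cos (π * j * x) * P.eval (cos (π * x)))) volume 0 1 :=
  hK.mul_continuousOn (by fun_prop)

lemma integral_mul_cos_int_eq_zero
    (hcos : ∀ j : ℕ, ∫ x in (0:ℝ)..1, K x * cos (π * j * x) = 0) (j : ℤ) :
    ∫ x in (0:ℝ)..1, K x * cos (π * j * x) = 0 := by
  obtain ⟨n, rfl | rfl⟩ := j.eq_nat_or_neg
  · exact_mod_cast hcos n
  · simpa [neg_mul, mul_neg, cos_neg] using hcos n

lemma integral_mul_cos_mul_eval_cos_eq_zero (hK : IntervalIntegrable K volume 0 1)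
    (hcos : ∀ j : ℕ, ∫ x in (0:ℝ)..1, K x * cos (π * j * x) = 0) (P : ℝ[X]) (j : ℤ) :
    ∫ x in (0:ℝ)..1, K x * (cos (π * j * x) * P.eval (cos (π * x))) = 0 := by
  induction P using Polynomial.induction_on generalizing j with
  | C a =>
    calc ∫ x in (0:ℝ)..1, K x * (cos (π * j * x) * (C a).eval (cos (π * x)))
        = a * ∫ x in (0:ℝ)..1, K x * cos (π * j * x) := by
          rw [← intervalIntegral.integral_const_mul]; congr 1; ext x; simp only [eval_C]; ring
      _ = 0 := by rw [integral_mul_cos_int_eq_zero hcos j, mul_zero]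
  | add p q hp hq =>
    simp only [eval_add, mul_add]
    rw [intervalIntegral.integral_add (intervalIntegrable_mul_cos_mul_eval_cos hK p j)
      (intervalIntegrable_mul_cos_mul_eval_cos hK q j), hp, hq, add_zero]
  | monomial n a ih =>
    have hsplit : ∀ x, K x * (cos (π * j * x) * (C a * X ^ (n + 1)).eval (cos (π * x)))
        = (K x * (cos (π * (j + 1 : ℤ) * x) * (C a * X ^ n).eval (cos (π * x)))
          + K x * (cos (π * (j - 1 : ℤ) * x) * (C a * X ^ n).eval (cos (π * x)))) / 2 := by
      intro x
      have h := cos_mul_cos_eq_half_add (π * j * x) (π * x)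
      simp only [eval_mul, eval_C, eval_pow, eval_X, pow_succ]
      push_cast
      rw [show π * (j + 1) * x = π * j * x + π * x by ring,
        show π * (j - 1) * x = π * j * x - π * x by ring]
      linear_combination K x * a * cos (π * x) ^ n * h
    simp only [hsplit]
    rw [intervalIntegral.integral_div, intervalIntegral.integral_add
      (intervalIntegrable_mul_cos_mul_eval_cos hK _ _)
      (intervalIntegrable_mul_cos_mul_eval_cos hK _ _), ih, ih, add_zero, zero_div]

lemma integral_mul_eq_zero_of_integral_mul_cos_eq_zero (hK : IntervalIntegrable K volume 0 1)
    (hcos : ∀ j : ℕ, ∫ x in (0:ℝ)..1, K x * cos (π * j * x) = 0) {f : ℝ → ℝ}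
    (hf : ContinuousOn f (Icc 0 1)) :
    ∫ x in (0:ℝ)..1, K x * f x = 0 := by
  have hK' : IntervalIntegrable (fun x => K x * f x) volume 0 1 :=
    hK.mul_continuousOn (by rwa [uIcc_of_le zero_le_one])
  have hbound : ∀ ε > 0, |∫ x in (0:ℝ)..1, K x * f x| ≤ ε * ∫ x in (0:ℝ)..1, |K x| := by
    intro ε hε
    -- Weierstrass for `y ↦ f (arccos y / π)` on `[-1, 1]`, then substitute `y = cos (π x)`.
    obtain ⟨P, hP⟩ := exists_polynomial_near_of_continuousOn (-1) 1 (fun y => f (arccos y / π))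
      (hf.comp (continuous_arccos.div_const π).continuousOn fun y _ =>
        ⟨div_nonneg (arccos_nonneg y) pi_pos.le, div_le_one_of_le₀ (arccos_le_pi y) pi_pos.le⟩) ε hε
    have happrox : ∀ x ∈ Icc (0:ℝ) 1, |f x - P.eval (cos (π * x))| ≤ ε := by
      intro x hx
      have h := hP (cos (π * x)) ⟨neg_one_le_cos _, cos_le_one _⟩
      rw [arccos_cos (by nlinarith [pi_pos, hx.1]) (by nlinarith [pi_pos, hx.2]),
        mul_div_cancel_left₀ x pi_ne_zero, abs_sub_comm] at h
      exact h.le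
    have hPK := integral_mul_cos_mul_eval_cos_eq_zero hK hcos P 0
    simp only [Int.cast_zero, mul_zero, zero_mul, cos_zero, one_mul] at hPK
    have hPK' := intervalIntegrable_mul_cos_mul_eval_cos hK P 0
    simp only [Int.cast_zero, mul_zero, zero_mul, cos_zero, one_mul] at hPK'
    calc |∫ x in (0:ℝ)..1, K x * f x|
        = |∫ x in (0:ℝ)..1, K x * (f x - P.eval (cos (π * x)))| := by
          simp only [mul_sub]; rw [intervalIntegral.integral_sub hK' hPK', hPK, sub_zero]
      _ ≤ ∫ x in (0:ℝ)..1, |K x * (f x - P.eval (cos (π * x)))| :=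
          intervalIntegral.abs_integral_le_integral_abs zero_le_one
      _ ≤ ∫ x in (0:ℝ)..1, ε * |K x| := by
          refine intervalIntegral.integral_mono_on zero_le_one
            (by simpa only [mul_sub] using (hK'.sub hPK').abs) (hK.abs.const_mul ε) fun x hx => ?_
          rw [abs_mul, mul_comm ε]
          exact mul_le_mul_of_nonneg_left (happrox x hx) (abs_nonneg _)
      _ = ε * ∫ x in (0:ℝ)..1, |K x| := intervalIntegral.integral_const_mul _ _
  have hlim : Tendsto (fun ε => ε * ∫ x in (0:ℝ)..1, |K x|) (𝓝[>] 0) (𝓝 0) := by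
    simpa using ((continuous_mul_const (∫ x in (0:ℝ)..1, |K x|)).tendsto 0).mono_left
      nhdsWithin_le_nhds
  exact abs_nonpos_iff.mp (ge_of_tendsto hlim (eventually_nhdsWithin_of_forall hbound))

lemma ae_eq_zero_of_integral_mul_cos_eq_zero (hK : IntervalIntegrable K volume 0 1)
    (hcos : ∀ j : ℕ, ∫ x in (0:ℝ)..1, K x * cos (π * j * x) = 0) :
    ∀ᵐ x ∂volume.restrict (Icc (0:ℝ) 1), K x = 0 := by
  have hKint : IntegrableOn K (Icc 0 1) :=
    (intervalIntegrable_iff_integrableOn_Icc_of_le zero_le_one).mp hK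
  refine ae_eq_zero_of_integral_contDiff_smul_eq_zero hKint.locallyIntegrable fun g hg _ => ?_
  rw [integral_Icc_eq_integral_Ioc, ← intervalIntegral.integral_of_le zero_le_one]
  simpa only [smul_eq_mul, mul_comm (g _)] using
    integral_mul_eq_zero_of_integral_mul_cos_eq_zero hK hcos hg.continuous.continuousOn

end CosineCompleteness

lemma ae_eq_integral_of_integral_mul_cosBasisFun_eq_zero {K : ℝ → ℝ}
    (hK : IntervalIntegrable K volume 0 1)
    (hcoef : ∀ k ≠ 0, ∫ x in (0:ℝ)..1, K x * cosBasisFun k x = 0) :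
    ∀ᵐ x ∂volume.restrict (Icc (0:ℝ) 1), K x = ∫ t in (0:ℝ)..1, K t := by
  set m := ∫ t in (0:ℝ)..1, K t
  have hcos : ∀ j : ℕ, ∫ x in (0:ℝ)..1, (K x - m) * cos (π * j * x) = 0 := by
    intro j
    have hc : Continuous fun x : ℝ => cos (π * j * x) := by fun_prop
    simp only [sub_mul]
    rw [intervalIntegral.integral_sub (hK.mul_continuousOn hc.continuousOn)
      ((hc.intervalIntegrable _ _).const_mul m), intervalIntegral.integral_const_mul]
    rcases eq_or_ne j 0 with rfl | hj
    · simp [m]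
    · have hKj := hcoef j hj
      simp only [cosBasisFun_of_ne_zero hj, mul_left_comm (K _),
        intervalIntegral.integral_const_mul, mul_eq_zero, sqrt_eq_zero',
        show ¬ (2:ℝ) ≤ 0 by norm_num, false_or] at hKj
      have hcj := integral_cos_pi_int_mul j
      simp only [Int.cast_natCast, Nat.cast_eq_zero, hj, if_false] at hcj
      rw [hKj, hcj]; ring
  filter_upwards [ae_eq_zero_of_integral_mul_cos_eq_zero (hK.sub intervalIntegrable_const) hcos]
    with x hx using sub_eq_zero.mp hx

lemma integral_primitive_sum_cosBasisDeriv_mul_cosBasisFun (a : ℕ → ℝ) {n j : ℕ} (hj : j ≠ 0)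
    (hjn : j < n) :
    ∫ x in (0:ℝ)..1, (∫ t in (0:ℝ)..x, ∑ k ∈ Finset.range n, a k * cosBasisDeriv k t)
      * cosBasisFun j x = a j := by
  have hprim : ∀ x, ∫ t in (0:ℝ)..x, ∑ k ∈ Finset.range n, a k * cosBasisDeriv k t
      = ∑ k ∈ Finset.range n, a k * (cosBasisFun k x - cosBasisFun k 0) := by
    intro x
    rw [intervalIntegral.integral_finsetSum fun k _ =>
      ((continuous_cosBasisDeriv k).intervalIntegrable _ _).const_mul (a k)]
    simp only [intervalIntegral.integral_const_mul, integral_cosBasisDeriv]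
  have hterm : ∀ k, ∫ x in (0:ℝ)..1, a k * (cosBasisFun k x - cosBasisFun k 0) * cosBasisFun j x
      = if k = j then a k else 0 := by
    intro k
    simp only [mul_assoc, sub_mul, intervalIntegral.integral_const_mul]
    rw [intervalIntegral.integral_sub
      ((by fun_prop : Continuous fun x => cosBasisFun k x * cosBasisFun j x).intervalIntegrable _ _)
      ((continuous_cosBasisFun j).intervalIntegrable _ _ |>.const_mul _),
      intervalIntegral.integral_const_mul, integral_cosBasisFun_mul_cosBasisFun,
      integral_cosBasisFun hj]
    split_ifs <;> ring
  simp only [hprim, Finset.sum_mul]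
  rw [intervalIntegral.integral_finsetSum fun k _ => by
    apply Continuous.intervalIntegrable; fun_prop]
  simp only [hterm, Finset.sum_ite_eq', Finset.mem_range, hjn, if_true]

lemma Continuous.memLp_restrict_Icc {f : ℝ → ℝ} (hf : Continuous f) (a b : ℝ) (p : ENNReal) :
    MemLp f p (volume.restrict (Icc a b)) := by
  obtain ⟨C, hC⟩ := isCompact_Icc.exists_bound_of_continuousOn hf.continuousOn
  exact MemLp.of_bound hf.aestronglyMeasurable C
    ((ae_restrict_iff' measurableSet_Icc).mpr (ae_of_all _ hC))

lemma MeasureTheory.MemLp.intervalIntegrable_of_mem_Icc {f : ℝ → ℝ} {p : ENNReal} {a b x : ℝ}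
    (hp : 1 ≤ p) (hf : MemLp f p (volume.restrict (Icc a b))) (hx : x ∈ Icc a b) :
    IntervalIntegrable f volume a x :=
  (intervalIntegrable_iff_integrableOn_Icc_of_le hx.1).mpr
    (IntegrableOn.mono_set (hf.integrable hp) (Icc_subset_Icc_right hx.2))

lemma sq_integral_le_integral_sq {Ω : Type*} [MeasurableSpace Ω] {μ : Measure Ω}
    [IsProbabilityMeasure μ] {f : Ω → ℝ} (hf : MemLp f 2 μ) :
    (∫ ω, f ω ∂μ) ^ 2 ≤ ∫ ω, f ω ^ 2 ∂μ := by
  have h := ProbabilityTheory.variance_eq_sub hf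
  simp only [Pi.pow_apply] at h
  linarith [ProbabilityTheory.variance_nonneg f μ]

instance isProbabilityMeasure_restrict_Icc_zero_one :
    IsProbabilityMeasure (volume.restrict (Icc (0:ℝ) 1)) :=
  ⟨by simp⟩

lemma abs_integral_le_sqrt_integral_sq {f : ℝ → ℝ} (hf : MemLp f 2 (volume.restrict (Icc 0 1)))
    {x : ℝ} (hx : x ∈ Icc (0:ℝ) 1) :
    |∫ t in (0:ℝ)..x, f t| ≤ √(∫ t in (0:ℝ)..1, f t ^ 2) := by
  calc |∫ t in (0:ℝ)..x, f t| ≤ ∫ t in (0:ℝ)..x, |f t| :=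
        intervalIntegral.abs_integral_le_integral_abs hx.1
    _ ≤ ∫ t in (0:ℝ)..1, |f t| :=
        intervalIntegral.integral_mono_interval le_rfl hx.1 hx.2 (ae_of_all _ fun _ => abs_nonneg _)
          (hf.abs.intervalIntegrable_of_mem_Icc one_le_two (right_mem_Icc.mpr zero_le_one))
    _ ≤ √(∫ t in (0:ℝ)..1, f t ^ 2) := by
        simp only [intervalIntegral.integral_of_le zero_le_one, ← integral_Icc_eq_integral_Ioc]
        refine le_sqrt_of_sq_le ?_
        simpa only [sq_abs] using sq_integral_le_integral_sq (f := fun t => |f t|) hf.abs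

lemma tendsto_integral_primitive_mul {φ : ℕ → ℝ → ℝ} {g ψ : ℝ → ℝ}
    (hφ : ∀ n, MemLp (φ n) 2 (volume.restrict (Icc 0 1)))
    (hg : MemLp g 2 (volume.restrict (Icc 0 1))) (hψ : Continuous ψ)
    (hconv : Tendsto (fun n => ∫ x in (0:ℝ)..1, (φ n x - g x) ^ 2) atTop (𝓝 0)) :
    Tendsto (fun n => ∫ x in (0:ℝ)..1, (∫ t in (0:ℝ)..x, φ n t) * ψ x) atTop
      (𝓝 (∫ x in (0:ℝ)..1, (∫ t in (0:ℝ)..x, g t) * ψ x)) := by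
  have hprim : ∀ {f : ℝ → ℝ}, MemLp f 2 (volume.restrict (Icc 0 1)) →
      IntervalIntegrable (fun x => (∫ t in (0:ℝ)..x, f t) * ψ x) volume 0 1 := fun hf =>
    ((intervalIntegral.continuousOn_primitive_interval' (hf.intervalIntegrable_of_mem_Icc
      one_le_two (right_mem_Icc.mpr zero_le_one)) left_mem_uIcc).mul
      hψ.continuousOn).intervalIntegrable
  set C := ∫ x in (0:ℝ)..1, |ψ x|
  have hbound : ∀ n, ‖(∫ x in (0:ℝ)..1, (∫ t in (0:ℝ)..x, φ n t) * ψ x)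
      - ∫ x in (0:ℝ)..1, (∫ t in (0:ℝ)..x, g t) * ψ x‖
      ≤ √(∫ x in (0:ℝ)..1, (φ n x - g x) ^ 2) * C := by
    intro n
    have hdiff : ∀ x ∈ Icc (0:ℝ) 1, |(∫ t in (0:ℝ)..x, φ n t) - ∫ t in (0:ℝ)..x, g t|
        ≤ √(∫ x in (0:ℝ)..1, (φ n x - g x) ^ 2) := fun x hx => by
      rw [← intervalIntegral.integral_sub ((hφ n).intervalIntegrable_of_mem_Icc one_le_two hx)
        (hg.intervalIntegrable_of_mem_Icc one_le_two hx)]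
      exact abs_integral_le_sqrt_integral_sq (f := fun t => φ n t - g t) ((hφ n).sub hg) hx
    rw [← intervalIntegral.integral_sub (hprim (hφ n)) (hprim hg), Real.norm_eq_abs,
      ← intervalIntegral.integral_const_mul]
    refine (intervalIntegral.abs_integral_le_integral_abs zero_le_one).trans
      (intervalIntegral.integral_mono_on zero_le_one ((hprim (hφ n)).sub (hprim hg)).abs
        ((hψ.intervalIntegrable _ _).abs.const_mul _) fun x hx => ?_)
    rw [← sub_mul, abs_mul]
    exact mul_le_mul_of_nonneg_right (hdiff x hx) (abs_nonneg _)
  rw [tendsto_iff_norm_sub_tendsto_zero]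
  refine squeeze_zero (fun _ => norm_nonneg _) hbound ?_
  simpa using ((continuous_sqrt.tendsto 0).comp hconv).mul_const C

lemma integral_sub_primitive_mul_cosBasisFun_eq_zero {f g : ℝ → ℝ}
    (hf : IntervalIntegrable f volume 0 1) (hg : MemLp g 2 (volume.restrict (Icc 0 1)))
    (hconv : Tendsto
      (fun n => ∫ u in (0:ℝ)..1,
        (∑ k ∈ Finset.range n,
            (∫ v in (0:ℝ)..1, f v * cosBasisFun k v) * cosBasisDeriv k u - g u) ^ 2)
      atTop (𝓝 0))
    {j : ℕ} (hj : j ≠ 0) :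
    ∫ x in (0:ℝ)..1, (f x - ∫ t in (0:ℝ)..x, g t) * cosBasisFun j x = 0 := by
  set c : ℕ → ℝ := fun k => ∫ v in (0:ℝ)..1, f v * cosBasisFun k v
  have hlim := tendsto_integral_primitive_mul
    (φ := fun n u => ∑ k ∈ Finset.range n, c k * cosBasisDeriv k u)
    (fun n => Continuous.memLp_restrict_Icc (by fun_prop) 0 1 2) hg (continuous_cosBasisFun j)
    hconv
  have hev : ∀ᶠ n in atTop, ∫ x in (0:ℝ)..1,
      (∫ t in (0:ℝ)..x, ∑ k ∈ Finset.range n, c k * cosBasisDeriv k t) * cosBasisFun j x = c j :=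
    (eventually_gt_atTop j).mono fun n hn =>
      integral_primitive_sum_cosBasisDeriv_mul_cosBasisFun c hj hn
  have hcj : c j = ∫ x in (0:ℝ)..1, (∫ t in (0:ℝ)..x, g t) * cosBasisFun j x :=
    tendsto_nhds_unique (tendsto_const_nhds.congr' (hev.mono fun _ h => h.symm)) hlim
  have hGj : ContinuousOn (fun x => (∫ t in (0:ℝ)..x, g t) * cosBasisFun j x) (uIcc 0 1) :=
    (intervalIntegral.continuousOn_primitive_interval' (hg.intervalIntegrable_of_mem_Icc
      one_le_two (right_mem_Icc.mpr zero_le_one)) left_mem_uIcc).mul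
      (continuous_cosBasisFun j).continuousOn
  simp only [sub_mul]
  rw [intervalIntegral.integral_sub
    (hf.mul_continuousOn (continuous_cosBasisFun j).continuousOn) hGj.intervalIntegrable,
    ← hcj, sub_self]

lemma ContinuousOn.nonneg_of_ae_nonneg_Icc {F : ℝ → ℝ} {a b : ℝ} (hab : a < b)
    (hF : ContinuousOn F (Icc a b)) (hae : ∀ᵐ x ∂volume.restrict (Icc a b), 0 ≤ F x) :
    ∀ x ∈ Icc a b, 0 ≤ F x := by
  have hmin : EqOn (fun x => min (F x) 0) 0 (Icc a b) :=
    Measure.eqOn_Icc_of_ae_eq volume hab.ne (hae.mono fun x hx => min_eq_right hx)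
      (hF.inf continuousOn_const) continuousOn_const
  exact fun x hx => min_eq_right_iff.mp (hmin hx)

lemma ae_eq_zero_of_primitive_add_const_nonneg {g : ℝ → ℝ} {a b c : ℝ}
    (hg : IntervalIntegrable g volume a b)
    (hnonneg : ∀ x ∈ Icc a b, 0 ≤ (∫ t in a..x, g t) + c) :
    ∀ᵐ u ∂volume.restrict (Icc a b), (∫ t in a..u, g t) + c = 0 → g u = 0 := by
  rw [Measure.restrict_congr_set Ioo_ae_eq_Icc.symm]
  filter_upwards [ae_restrict_mem measurableSet_Ioo, ae_restrict_of_ae hg.ae_hasDerivAt_integral]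
    with u hu hderiv hzero
  have hmin : IsLocalMin (fun x => (∫ t in a..x, g t) + c) u :=
    Filter.mem_of_superset (Icc_mem_nhds hu.1 hu.2) fun x hx => by
      simpa only [Set.mem_ofPred_eq, hzero] using hnonneg x hx
  exact hmin.hasDerivAt_eq_zero
    ((hderiv (Icc_subset_uIcc (Ioo_subset_Icc_self hu)) a left_mem_uIcc).add_const c)

/-- Let `h ∈ L²[0,1]` be nonnegative, and suppose the series
`ḣ = ∑ₙ ⟨h, ẽₙ⟩ ẽₙ'` converges in `L²[0,1]` (cosine basis `ẽ`).  Then `ḣ · 𝟙{h = 0} = 0`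
almost everywhere on `[0,1]`. -/
theorem weak_derivative_vanishes_on_zero_set
    (h hdot : ℝ → ℝ)
    (hpos : ∀ u ∈ Set.Icc (0:ℝ) 1, 0 ≤ h u)
    (hh : MemLp h 2 (volume.restrict (Set.Icc (0:ℝ) 1)))
    (hhdot : MemLp hdot 2 (volume.restrict (Set.Icc (0:ℝ) 1)))
    (hconv : Tendsto
      (fun n => ∫ u in (0:ℝ)..1,
        (∑ k ∈ Finset.range n,
            (∫ v in (0:ℝ)..1, h v * cosBasisFun k v) * cosBasisDeriv k u - hdot u) ^ 2)
      atTop (𝓝 0)) :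
    ∀ᵐ u ∂(volume.restrict (Set.Icc (0:ℝ) 1)), h u = 0 → hdot u = 0 := by
  have hhi := hh.intervalIntegrable_of_mem_Icc one_le_two (right_mem_Icc.mpr zero_le_one)
  have hdoti := hhdot.intervalIntegrable_of_mem_Icc one_le_two (right_mem_Icc.mpr zero_le_one)
  set H : ℝ → ℝ := fun x => ∫ t in (0:ℝ)..x, hdot t
  have hH : ContinuousOn H (Icc 0 1) := by
    simpa only [uIcc_of_le zero_le_one] using
      intervalIntegral.continuousOn_primitive_interval' hdoti left_mem_uIcc
  set c := ∫ x in (0:ℝ)..1, (h x - H x)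
  have hconst : ∀ᵐ x ∂volume.restrict (Icc (0:ℝ) 1), h x - H x = c :=
    ae_eq_integral_of_integral_mul_cosBasisFun_eq_zero
      (hhi.sub (hH.intervalIntegrable_of_Icc zero_le_one))
      fun k hk => integral_sub_primitive_mul_cosBasisFun_eq_zero hhi hhdot hconv hk
  have hnonneg : ∀ x ∈ Icc (0:ℝ) 1, 0 ≤ H x + c := by
    refine (hH.add continuousOn_const).nonneg_of_ae_nonneg_Icc zero_lt_one ?_
    filter_upwards [hconst, ae_restrict_mem measurableSet_Icc] with x hx hmem
    linarith [hpos x hmem]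
  filter_upwards [ae_eq_zero_of_primitive_add_const_nonneg hdoti hnonneg, hconst]
    with u hu hcu hzero
  exact hu (by linarith)
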